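/- arXiv:cs/0702040 — 2 statements merged into one kernel-verified Lean document; each statement's English description precedes it below -/
import Mathlib

section
/- If a relation S on B terminates, R-steps in A lift to single S-steps in B up to a terminating and confluent auxiliary relation T whose normal forms are preserved by the lifting, and S-steps commute appropriately with T-normalization, then R terminates. Concretely: suppose each R-step a → b satisfies f a ⇒_S c ⇒*_T f b where f b is the T-normal form of c; suppose moreover that if f b ⇒_S c' then already c ⇒_S c'' with c'' ⇒*_T c' for some c''; then nontermination of R yields an infinite (S ∪ T)-sequence, so if S ∪ T terminates then R terminates. -/
/-! Each `R`-step `a → b` lifts to `f a ⇒_S c ⇒*_T f b`, a nonempty `(S ∪ T)`-path from `f a`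
to `f b`. Hence `R` is contained in the inverse image under `f` of the transitive closure of
`S ∪ T`, which is well founded (read backwards) as soon as `S ∪ T` is terminating. -/

open Relation

theorem wellFounded_swap_iff_not_exists_chain {α : Type*} {r : α → α → Prop} :
    WellFounded (Function.swap r) ↔ ¬ ∃ u : ℕ → α, ∀ n, r (u n) (u (n + 1)) := by
  rw [wellFounded_iff_isEmpty_descending_chain, isEmpty_subtype]
  exact ⟨fun h ⟨u, hu⟩ => h u hu, fun h u hu => h ⟨u, hu⟩⟩

theorem not_exists_chain_of_map_transGen {α β : Type*} {r : α → α → Prop} {s : β → β → Prop}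
    (f : α → β) (hrs : ∀ a b, r a b → TransGen s (f a) (f b))
    (hs : ¬ ∃ u : ℕ → β, ∀ n, s (u n) (u (n + 1))) :
    ¬ ∃ u : ℕ → α, ∀ n, r (u n) (u (n + 1)) := by
  rw [← wellFounded_swap_iff_not_exists_chain] at hs ⊢
  refine Subrelation.wf (fun {a b} h => ?_) (InvImage.wf f hs.transGen)
  exact transGen_swap.mpr (hrs b a h)

theorem stmt_1_general {A B : Type*} (f : A → B) (R : A → A → Prop) (S T : B → B → Prop)
    (hlift : ∀ a b, R a b → ∃ c, S (f a) c ∧ Relation.ReflTransGen T c (f b) ∧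
      ∀ d, ¬ T (f b) d)
    (hST : ¬ ∃ u : ℕ → B, ∀ n, S (u n) (u (n + 1)) ∨ T (u n) (u (n + 1))) :
    ¬ ∃ u : ℕ → A, ∀ n, R (u n) (u (n + 1)) := by
  refine not_exists_chain_of_map_transGen (s := fun x y => S x y ∨ T x y) f
    (fun a b hab => ?_) hST
  obtain ⟨c, hSc, hTc, -⟩ := hlift a b hab
  exact TransGen.head' (Or.inl hSc) (ReflTransGen.mono (fun _ _ => Or.inr) _ _ hTc)

/-- Termination transfer via lifting through a terminating confluent auxiliary
relation with commuting S-steps. -/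
theorem stmt_1 {A B : Type*} (f : A → B) (R : A → A → Prop) (S T : B → B → Prop)
    (hTterm : ¬ ∃ u : ℕ → B, ∀ n, T (u n) (u (n + 1)))
    (hTconf : ∀ a b c, Relation.ReflTransGen T a b → Relation.ReflTransGen T a c →
      ∃ d, Relation.ReflTransGen T b d ∧ Relation.ReflTransGen T c d)
    (hlift : ∀ a b, R a b → ∃ c, S (f a) c ∧ Relation.ReflTransGen T c (f b) ∧
      ∀ d, ¬ T (f b) d)
    (hcomm : ∀ a b c, R a b → S (f a) c → Relation.ReflTransGen T c (f b) →
      ∀ c', S (f b) c' → ∃ c'', S c c'' ∧ Relation.ReflTransGen T c'' c')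
    (hST : ¬ ∃ u : ℕ → B, ∀ n, S (u n) (u (n + 1)) ∨ T (u n) (u (n + 1))) :
    ¬ ∃ u : ℕ → A, ∀ n, R (u n) (u (n + 1)) :=
  stmt_1_general f R S T hlift hST
end

section
/- Normal form factorization through a sub-relation: let T be a confluent, terminating relation on B which is the union of two sub-relations T₁ and T₂ such that every T₂-normal form can only be further reduced by T₁-steps. Then for every b with T-normal form g, there exists a T₂-normal form h with b ⇒*_{T₂} h ⇒*_{T₁} g. -/
/-!
Termination gives `b` a `T₂`-normal form `h`, and confluence joins `h` with the `T`-normal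
form `g` of `b`; since `g` is normal, the join is `g` itself, so `h →*_T g`. Every step of
this reduction starts at a term reachable from the `T₂`-normal form `h`, hence is a `T₁`-step.
-/

open Relation

section NormalForm

variable {α : Type*} {r s : α → α → Prop} {a b : α}

theorem WellFounded.exists_reflTransGen_normal (hr : WellFounded (flip r)) (a : α) :
    ∃ b, ReflTransGen r a b ∧ ∀ c, ¬ r b c := by
  obtain ⟨b, hab, hmin⟩ := hr.has_min {b | ReflTransGen r a b} ⟨a, .refl⟩
  exact ⟨b, hab, fun c hbc => hmin c (hab.tail hbc) hbc⟩

theorem Relation.ReflTransGen.eq_of_normal (hab : ReflTransGen r a b) (ha : ∀ c, ¬ r a c) :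
    b = a := by
  rcases hab.cases_head with rfl | ⟨c, hac, -⟩
  · rfl
  · exact absurd hac (ha c)

theorem Relation.ReflTransGen.mono_on_reachable
    (hrs : ∀ c, ReflTransGen r a c → ∀ d, r c d → s c d) (hab : ReflTransGen r a b) :
    ReflTransGen s a b := by
  induction hab with
  | refl => exact .refl
  | tail hac hcd ih => exact ih.tail (hrs _ hac _ hcd)

end NormalForm

/-- Normal-form factorization: in a confluent terminating relation `T = T₁ ∪ T₂`
where `T₂`-normal forms only reduce by `T₁`-steps, every reduction to the
`T`-normal form factors through a `T₂`-normal form. -/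
theorem stmt_7 {B : Type*} (T₁ T₂ : B → B → Prop)
    (T : B → B → Prop) (hT : ∀ x y, T x y ↔ T₁ x y ∨ T₂ x y)
    (hconf : ∀ a b c, Relation.ReflTransGen T a b → Relation.ReflTransGen T a c →
      ∃ d, Relation.ReflTransGen T b d ∧ Relation.ReflTransGen T c d)
    (hterm : ¬ ∃ u : ℕ → B, ∀ n, T (u n) (u (n + 1)))
    (hclosed : ∀ b, (∀ d, ¬ T₂ b d) → ∀ c, Relation.ReflTransGen T b c →
      ∀ d, T c d → T₁ c d) :
    ∀ b g, Relation.ReflTransGen T b g → (∀ d, ¬ T g d) →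
      ∃ h, Relation.ReflTransGen T₂ b h ∧ (∀ d, ¬ T₂ h d) ∧
        Relation.ReflTransGen T₁ h g := by
  intro b g hbg hg
  have hT₂ : T₂ ≤ T := fun x y hxy => (hT x y).2 (Or.inr hxy)
  have hwf : WellFounded (flip T) :=
    wellFounded_iff_isEmpty_descending_chain.2 ⟨fun ⟨u, hu⟩ => hterm ⟨u, hu⟩⟩
  have hwf₂ : WellFounded (flip T₂) := Subrelation.wf (fun hxy => hT₂ _ _ hxy) hwf
  obtain ⟨h, hbh, hh⟩ := hwf₂.exists_reflTransGen_normal b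
  refine ⟨h, hbh, hh, ?_⟩
  obtain ⟨d, hgd, hhd⟩ := hconf b g h hbg (ReflTransGen.mono hT₂ _ _ hbh)
  rw [hgd.eq_of_normal hg] at hhd
  exact hhd.mono_on_reachable (hclosed h hh)
end
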